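/- Let Δ ⊆ ℝ^d be a nonempty convex compact set with diam(Δ) > 0, R : Δ → ℝ convex and L-Lipschitz for ‖·‖₂, R̄(δ) = inf_{δ'∈Δ}{R(δ') + L‖δ−δ'‖₂}, η > 0, and let C = conv(Λ) + B(0, 2η·diam(Δ)) where Λ = ∪_{δ∈Δ̄} ∂R̄(δ), conv denotes the convex hull, and B(0,r) the closed Euclidean ball of radius r. For any λ_t ∈ ℝ^d and δ_t ∈ Δ, let γ_t be any maximizer of γ ↦ ⟨λ_t, γ⟩ − R̄(γ) over Δ_{δ_t}, and set λ_{t+1} = λ_t + η(δ_t − γ_t). Then dist(λ_{t+1}, C) ≤ dist(λ_t, C), where dist is the Euclidean distance to a set. -/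

import Mathlib

/-!
The maximizer `γ` of `⟪λ, ·⟫ - R̄` over the ball `B(δ, r)` satisfies the optimality condition
`λ = g + β • (γ - δ)` with `g ∈ ∂R̄(γ) ⊆ Λ` and `β ≥ 0`: separating the strict epigraph of
`R̄ - ⟪λ, ·⟫` from `B(δ, r) × (-∞, R̄ γ - ⟪λ, γ⟫]` yields a subgradient plus an element of the
normal cone of the ball at `γ`, and that cone is the ray spanned by `γ - δ`.
Hence `λ' = g + (β - η) • (γ - δ)`. If `β ≤ η` then `λ'` lies in `C`, because
`‖γ - δ‖ ≤ diam Δ`; otherwise `λ'` lies on the segment from `λ` to `g ∈ C`, and moving towards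
a point of a convex set does not increase the distance to that set.
-/

open Metric Set
open scoped RealInnerProductSpace Pointwise

section McShane

variable {E : Type*} [NormedAddCommGroup E]

noncomputable def mcShaneExtension (s : Set E) (f : E → ℝ) (K : NNReal) (x : E) : ℝ :=
  ⨅ y : s, f y + K * ‖x - y‖

variable {s : Set E} {f : E → ℝ} {K : NNReal}

theorem LipschitzOnWith.bddBelow_range_add_mul_norm (hf : LipschitzOnWith K f s) (x : E) :
    BddBelow (range fun y : s => f y + K * ‖x - y‖) := by
  rcases s.eq_empty_or_nonempty with rfl | ⟨a, ha⟩
  · simp [range_eq_empty]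
  refine ⟨f a - K * ‖x - a‖, ?_⟩
  rintro _ ⟨y, rfl⟩
  calc f a - K * ‖x - a‖ ≤ f y + K * ‖a - y‖ - K * ‖x - a‖ := by
        gcongr; simpa [dist_eq_norm] using hf.le_add_mul ha y.2
    _ ≤ f y + K * ‖x - y‖ := by
        have := norm_sub_le_norm_sub_add_norm_sub a x y
        rw [norm_sub_rev a x] at this
        nlinarith [K.2]

theorem LipschitzOnWith.mcShaneExtension_le (hf : LipschitzOnWith K f s) (x : E) {y : E}
    (hy : y ∈ s) : mcShaneExtension s f K x ≤ f y + K * ‖x - y‖ :=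
  ciInf_le (hf.bddBelow_range_add_mul_norm x) ⟨y, hy⟩

theorem LipschitzOnWith.lipschitzWith_mcShaneExtension [Nonempty s]
    (hf : LipschitzOnWith K f s) : LipschitzWith K (mcShaneExtension s f K) := by
  refine LipschitzWith.of_le_add_mul K fun x x' => ?_
  rw [← sub_le_iff_le_add]
  refine le_ciInf fun y => ?_
  calc mcShaneExtension s f K x - K * dist x x'
      ≤ f y + K * ‖x - y‖ - K * ‖x - x'‖ := by
        gcongr
        · exact hf.mcShaneExtension_le x y.2
        · exact (dist_eq_norm x x').ge
    _ ≤ f y + K * ‖x' - y‖ := by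
        have := norm_sub_le_norm_sub_add_norm_sub x x' y
        nlinarith [K.2]

theorem ConvexOn.convexOn_mcShaneExtension [NormedSpace ℝ E] [Nonempty s] (hs : Convex ℝ s)
    (hfc : ConvexOn ℝ s f) (hf : LipschitzOnWith K f s) :
    ConvexOn ℝ univ (mcShaneExtension s f K) := by
  refine ⟨convex_univ, fun x _ x' _ a b ha hb hab => le_of_forall_pos_le_add fun ε hε => ?_⟩
  obtain ⟨y, hy⟩ := exists_lt_of_ciInf_lt (lt_add_of_pos_right (mcShaneExtension s f K x) hε)
  obtain ⟨y', hy'⟩ := exists_lt_of_ciInf_lt (lt_add_of_pos_right (mcShaneExtension s f K x') hε)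
  have hdist : ‖a • x + b • x' - (a • y + b • y')‖ ≤ a * ‖x - y‖ + b * ‖x' - y'‖ := by
    calc ‖a • x + b • x' - (a • y + b • y')‖ = ‖a • (x - y) + b • (x' - y')‖ := by
          congr 1; module
      _ ≤ a * ‖x - y‖ + b * ‖x' - y'‖ := by
          refine (norm_add_le _ _).trans ?_
          rw [norm_smul_of_nonneg ha, norm_smul_of_nonneg hb]
  calc mcShaneExtension s f K (a • x + b • x')
      ≤ f (a • y + b • y') + K * ‖a • x + b • x' - (a • y + b • y')‖ :=
        hf.mcShaneExtension_le _ (hs y.2 y'.2 ha hb hab)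
    _ ≤ a * (f y + K * ‖x - y‖) + b * (f y' + K * ‖x' - y'‖) := by
        have := hfc.2 y.2 y'.2 ha hb hab
        rw [smul_eq_mul, smul_eq_mul] at this
        nlinarith [mul_le_mul_of_nonneg_left hdist K.2]
    _ ≤ a * (mcShaneExtension s f K x + ε) + b * (mcShaneExtension s f K x' + ε) := by
        gcongr
    _ = a * mcShaneExtension s f K x + b * mcShaneExtension s f K x' + ε := by
        linear_combination ε * hab

end McShane

section Subgradient

variable {E : Type*} [NormedAddCommGroup E] [InnerProductSpace ℝ E]

theorem ConvexOn.exists_subgradient_of_isMinOn [CompleteSpace E] {f : E → ℝ}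
    (hf : ConvexOn ℝ univ f) (hfc : Continuous f) {s : Set E} (hs : Convex ℝ s) {x : E}
    (hx : x ∈ s) (hmin : IsMinOn f s x) :
    ∃ g : E, (∀ y, f x + ⟪g, y - x⟫ ≤ f y) ∧ ∀ y ∈ s, 0 ≤ ⟪g, y - x⟫ := by
  -- separate the open strict epigraph of `f` from `s × (-∞, f x]`
  have hopen : IsOpen {p : E × ℝ | f p.1 < p.2} :=
    isOpen_lt (hfc.comp continuous_fst) continuous_snd
  have hconv : Convex ℝ {p : E × ℝ | f p.1 < p.2} := by
    simpa using hf.convex_strict_epigraph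
  have hdisj : Disjoint {p : E × ℝ | f p.1 < p.2} (s ×ˢ Iic (f x)) := by
    refine disjoint_left.2 fun p hp hp' => ?_
    exact (hp.trans_le hp'.2).not_ge (isMinOn_iff.1 hmin _ hp'.1)
  obtain ⟨F, u, hFS, hFT⟩ :=
    geometric_hahn_banach_open hconv hopen (hs.prod (convex_Iic _)) hdisj
  set ℓ : StrongDual ℝ E := F.comp (ContinuousLinearMap.inl ℝ E ℝ)
  set c : ℝ := F (0, 1)
  have hF : ∀ y t, F (y, t) = ℓ y + t * c := by
    intro y t
    rw [show ((y, t) : E × ℝ) = (y, 0) + t • (0, 1) by simp, map_add, map_smul, smul_eq_mul]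
    rfl
  have hc : c < 0 := by
    have h1 := hFS (x, f x + 1) (by simp)
    have h2 := hFT (x, f x) ⟨hx, mem_Iic.2 le_rfl⟩
    rw [hF] at h1 h2
    linarith
  set h : E → ℝ := fun y => (ℓ y - u) / -c
  have hle : ∀ y, h y ≤ f y := by
    refine fun y => le_of_forall_gt_imp_ge_of_dense fun t ht => ?_
    have := hFS (y, t) ht
    rw [hF] at this
    rw [div_le_iff₀ (neg_pos.2 hc)]
    linarith
  have hge : ∀ y ∈ s, f x ≤ h y := by
    intro y hy
    have := hFT (y, f x) ⟨hy, mem_Iic.2 le_rfl⟩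
    rw [hF] at this
    rw [le_div_iff₀ (neg_pos.2 hc)]
    linarith
  have hinner : ∀ y, ⟪(-c)⁻¹ • (InnerProductSpace.toDual ℝ E).symm ℓ, y - x⟫ = h y - h x := by
    intro y
    simp only [real_inner_smul_left, InnerProductSpace.toDual_symm_apply, map_sub, h]
    field_simp
    ring
  refine ⟨(-c)⁻¹ • (InnerProductSpace.toDual ℝ E).symm ℓ, fun y => ?_, fun y hy => ?_⟩
  · linarith [hinner y, hle y, hge x hx]
  · linarith [hinner y, hle x, hge y hy]

theorem exists_nonneg_smul_of_forall_inner_sub_nonpos {δ γ v : E} {r : ℝ} (hr : 0 < r)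
    (hγ : γ ∈ closedBall δ r) (hv : ∀ y ∈ closedBall δ r, ⟪v, y - γ⟫ ≤ 0) :
    ∃ β : ℝ, 0 ≤ β ∧ v = β • (γ - δ) := by
  rcases eq_or_ne v 0 with rfl | hv0
  · exact ⟨0, le_rfl, by simp⟩
  have hnv : 0 < ‖v‖ := norm_pos_iff.2 hv0
  have hγ' : ‖γ - δ‖ ≤ r := by rwa [mem_closedBall, dist_eq_norm] at hγ
  -- test against the point of the sphere in the direction of `v`
  have hy := hv (δ + (r / ‖v‖) • v) (by
    rw [mem_closedBall, dist_eq_norm, add_sub_cancel_left, norm_smul_of_nonneg (by positivity),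
      div_mul_cancel₀ _ hnv.ne'])
  have hsplit : ⟪v, δ + (r / ‖v‖) • v - γ⟫ = r * ‖v‖ - ⟪v, γ - δ⟫ := by
    rw [show δ + (r / ‖v‖) • v - γ = (r / ‖v‖) • v - (γ - δ) by abel, inner_sub_right,
      real_inner_smul_right, real_inner_self_eq_norm_sq]
    field_simp
  have hcs := real_inner_le_norm v (γ - δ)
  have hnorm : ‖γ - δ‖ = r := le_antisymm hγ' (le_of_mul_le_mul_left (by nlinarith) hnv)
  have heq : ⟪v, γ - δ⟫ = ‖v‖ * ‖γ - δ‖ := by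
    apply le_antisymm hcs
    rw [hnorm]; linarith
  refine ⟨‖v‖ / r, by positivity, ?_⟩
  rw [inner_eq_norm_mul_iff_real, hnorm] at heq
  rw [div_eq_inv_mul, mul_smul, ← heq, smul_smul, inv_mul_cancel₀ hr.ne', one_smul]

theorem ConvexOn.exists_subgradient_add_smul_of_isMaxOn_closedBall [CompleteSpace E]
    {f : E → ℝ} (hf : ConvexOn ℝ univ f) (hfc : Continuous f) {δ γ lam : E} {r : ℝ}
    (hr : 0 < r) (hγ : γ ∈ closedBall δ r)
    (hmax : IsMaxOn (fun z => ⟪lam, z⟫ - f z) (closedBall δ r) γ) :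
    ∃ g : E, ∃ β : ℝ, 0 ≤ β ∧ lam = g + β • (γ - δ) ∧ ∀ y, f γ + ⟪g, y - γ⟫ ≤ f y := by
  have hconv : ConvexOn ℝ univ (fun z => f z - ⟪lam, z⟫) :=
    hf.sub ((innerₛₗ ℝ lam).concaveOn convex_univ)
  obtain ⟨g₀, hsub, hnormal⟩ := hconv.exists_subgradient_of_isMinOn
    (hfc.sub (continuous_const.inner continuous_id)) (convex_closedBall δ r) hγ
    (fun y hy => by have := hmax hy; dsimp at this ⊢; linarith)
  obtain ⟨β, hβ, hβv⟩ := exists_nonneg_smul_of_forall_inner_sub_nonpos (v := -g₀) hr hγ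
    (fun y hy => by simpa [inner_neg_left] using hnormal y hy)
  refine ⟨lam + g₀, β, hβ, by rw [← hβv]; abel, fun y => ?_⟩
  have := hsub y
  rw [inner_add_left]
  have hlin : ⟪lam, y⟫ - ⟪lam, γ⟫ = ⟪lam, y - γ⟫ := (inner_sub_right _ _ _).symm
  linarith

end Subgradient

theorem Convex.infDist_le_of_mem_segment {E : Type*} [NormedAddCommGroup E] [NormedSpace ℝ E]
    {C : Set E} (hC : Convex ℝ C) {x c x' : E} (hc : c ∈ C) (hx' : x' ∈ segment ℝ x c) :
    infDist x' C ≤ infDist x C := by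
  obtain ⟨a, b, ha, hb, hab, rfl⟩ := hx'
  refine (le_infDist ⟨c, hc⟩).2 fun p hp => ?_
  calc infDist (a • x + b • c) C ≤ dist (a • x + b • c) (a • p + b • c) :=
        infDist_le_dist_of_mem (hC hp hc ha hb hab)
    _ = a * dist x p := by
        rw [dist_add_right, dist_smul₀, Real.norm_of_nonneg ha]
    _ ≤ dist x p := mul_le_of_le_one_left dist_nonneg (by linarith)

theorem stmt3_general {d : ℕ} (Δ : Set (EuclideanSpace ℝ (Fin d)))
    (hΔconv : Convex ℝ Δ)
    (hdiam : 0 < diam Δ)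
    (L : NNReal) (R : EuclideanSpace ℝ (Fin d) → ℝ)
    (hRconv : ConvexOn ℝ Δ R) (hRlip : LipschitzOnWith L R Δ)
    (Rbar : EuclideanSpace ℝ (Fin d) → ℝ)
    (hRbar : ∀ δ, Rbar δ =
      ⨅ δ' : Δ, (R δ' + (L : ℝ) * ‖δ - (δ' : EuclideanSpace ℝ (Fin d))‖))
    (η : ℝ) (hη : 0 < η)
    (Λ : Set (EuclideanSpace ℝ (Fin d)))
    (hΛ : Λ = ⋃ δ' ∈ (⋃ δ'' ∈ Δ, closedBall δ'' (diam Δ)),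
      {l : EuclideanSpace ℝ (Fin d) | ∀ y, Rbar δ' + ⟪l, y - δ'⟫ ≤ Rbar y})
    (C : Set (EuclideanSpace ℝ (Fin d)))
    (hC : C = convexHull ℝ Λ + closedBall 0 (2 * η * diam Δ))
    (lamt δt γt lamt1 : EuclideanSpace ℝ (Fin d))
    (hδt : δt ∈ Δ)
    (hγmem : γt ∈ closedBall δt (diam Δ))
    (hγmax : ∀ g ∈ closedBall δt (diam Δ),
      ⟪lamt, g⟫ - Rbar g ≤ ⟪lamt, γt⟫ - Rbar γt)
    (hrec : lamt1 = lamt + η • (δt - γt)) :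
    Metric.infDist lamt1 C ≤ Metric.infDist lamt C := by
  have : Nonempty Δ := ⟨⟨δt, hδt⟩⟩
  obtain rfl : Rbar = mcShaneExtension Δ R L := funext hRbar
  have hRbar_conv := hRconv.convexOn_mcShaneExtension hΔconv hRlip
  obtain ⟨g, β, hβ, hlamt, hsub⟩ := hRbar_conv.exists_subgradient_add_smul_of_isMaxOn_closedBall
    hRlip.lipschitzWith_mcShaneExtension.continuous hdiam hγmem hγmax
  have hgΛ : g ∈ Λ := hΛ ▸ mem_iUnion₂.2 ⟨γt, mem_iUnion₂.2 ⟨δt, hδt, hγmem⟩, hsub⟩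
  have hgC : g ∈ C :=
    hC ▸ ⟨g, subset_convexHull ℝ Λ hgΛ, 0, mem_closedBall_self (by positivity), add_zero g⟩
  have hlamt1 : lamt1 = g + (β - η) • (γt - δt) := by rw [hrec, hlamt]; module
  have hCconv : Convex ℝ C := hC ▸ (convex_convexHull ℝ Λ).add (convex_closedBall 0 _)
  rcases le_or_gt β η with hβη | hηβ
  · have hmem : lamt1 ∈ C := by
      rw [hC, hlamt1]
      refine add_mem_add (subset_convexHull ℝ Λ hgΛ) ?_
      have hγδ : ‖γt - δt‖ ≤ diam Δ := mem_closedBall_iff_norm.1 hγmem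
      rw [mem_closedBall_zero_iff, norm_smul, Real.norm_of_nonpos (by linarith)]
      nlinarith
    rw [infDist_zero_of_mem hmem]
    exact infDist_nonneg
  · refine hCconv.infDist_le_of_mem_segment hgC ⟨1 - η / β, η / β, ?_, by positivity, by ring, ?_⟩
    · exact sub_nonneg.2 ((div_le_one (hη.trans hηβ)).2 hηβ.le)
    · rw [hlamt1, hlamt, smul_add, smul_smul, sub_mul, one_mul,
        div_mul_cancel₀ _ (hη.trans hηβ).ne']
      module

/-- one-step contraction toward `C`: one step of the dual update
`λ_{t+1} = λ_t + η(δ_t − γ_t)`, where `γ_t` maximizes `γ ↦ ⟨λ_t, γ⟩ − R̄(γ)` over the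
closed ball `Δ_{δ_t}` of center `δ_t ∈ Δ` and radius `diam Δ > 0`, does not increase
the distance to the set `C = conv(Λ) + B(0, 2η·diam Δ)`, where
`Λ = ∪_{δ ∈ Δ̄} ∂R̄(δ)`. -/
theorem stmt3 {d : ℕ} (Δ : Set (EuclideanSpace ℝ (Fin d)))
    (hΔne : Δ.Nonempty) (hΔconv : Convex ℝ Δ) (hΔcomp : IsCompact Δ)
    (hdiam : 0 < diam Δ)
    (L : NNReal) (R : EuclideanSpace ℝ (Fin d) → ℝ)
    (hRconv : ConvexOn ℝ Δ R) (hRlip : LipschitzOnWith L R Δ)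
    (Rbar : EuclideanSpace ℝ (Fin d) → ℝ)
    (hRbar : ∀ δ, Rbar δ =
      ⨅ δ' : Δ, (R δ' + (L : ℝ) * ‖δ - (δ' : EuclideanSpace ℝ (Fin d))‖))
    (η : ℝ) (hη : 0 < η)
    (Λ : Set (EuclideanSpace ℝ (Fin d)))
    (hΛ : Λ = ⋃ δ' ∈ (⋃ δ'' ∈ Δ, closedBall δ'' (diam Δ)),
      {l : EuclideanSpace ℝ (Fin d) | ∀ y, Rbar δ' + ⟪l, y - δ'⟫ ≤ Rbar y})
    (C : Set (EuclideanSpace ℝ (Fin d)))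
    (hC : C = convexHull ℝ Λ + closedBall 0 (2 * η * diam Δ))
    (lamt δt γt lamt1 : EuclideanSpace ℝ (Fin d))
    (hδt : δt ∈ Δ)
    (hγmem : γt ∈ closedBall δt (diam Δ))
    (hγmax : ∀ g ∈ closedBall δt (diam Δ),
      ⟪lamt, g⟫ - Rbar g ≤ ⟪lamt, γt⟫ - Rbar γt)
    (hrec : lamt1 = lamt + η • (δt - γt)) :
    Metric.infDist lamt1 C ≤ Metric.infDist lamt C :=
  stmt3_general Δ hΔconv hdiam L R hRconv hRlip Rbar hRbar η hη Λ hΛ C hC lamt δt γt lamt1 hδt hγmem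
    hγmax hrec
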